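/- arXiv:2503.09817 — 5 statements merged into one kernel-verified Lean document; each statement's English description precedes it below -/
import Mathlib

section
/- Fix γ ∈ [0,1] and a probability density m₀ on ℝ^d. Let p̂_t and p̃_t be time-dependent C¹ probability density paths on ℝ^d generated (via the continuity equation) by C¹ vector fields v̂_t and ṽ_t respectively, with common source p̂₀ = p̃₀ = m₀; assume (1−γ)p̂_t(x) + γp̃_t(x) > 0 for all (t,x) and that ∫‖v̂_t‖² p̂_t dx and ∫‖ṽ_t‖² p̃_t dx are finite for each t. Define v_t(x) := ((1−γ)p̂_t(x)v̂_t(x) + γp̃_t(x)ṽ_t(x)) / ((1−γ)p̂_t(x) + γp̃_t(x)). Then: (i) for every t ∈ [0,1] and every measurable w : ℝ^d → ℝ^d, (1−γ)∫‖v_t(x)−v̂_t(x)‖² p̂_t(x)dx + γ∫‖v_t(x)−ṽ_t(x)‖² p̃_t(x)dx ≤ (1−γ)∫‖w(x)−v̂_t(x)‖² p̂_t(x)dx + γ∫‖w(x)−ṽ_t(x)‖² p̃_t(x)dx, so v_t minimizes the mixed flow-matching objective over all vector fields; (ii) v_t generates the probability path m_t := (1−γ)p̂_t + γp̃_t, which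 satisfies m_0 = m₀ at time 0 and m_1 = (1−γ)p̂₁ + γp̃₁ at time 1. In particular, if p̂₁ is a density of the one-step kernel P(·|s,a) and p̃₁ is a density of (P^π m₁^{prev})(·|s,a) for some family m₁^{prev}, then m_1 is a density of the Bellman update (T^π m₁^{prev})(·|s,a). -/
open MeasureTheory
open scoped ENNReal NNReal

noncomputable section

/-- The divergence of a vector field on `ℝ^d` (trace of the Jacobian). -/
def diverg {d : ℕ} (F : EuclideanSpace ℝ (Fin d) → EuclideanSpace ℝ (Fin d))
    (x : EuclideanSpace ℝ (Fin d)) : ℝ :=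
  ∑ i : Fin d, fderiv ℝ F x (EuclideanSpace.single i 1) i

/-! The mixed objective is, pointwise in `x`, a weighted sum of squared distances from `w x` to
`v̂_t x` and `ṽ_t x`, hence minimized by their weighted barycenter `v_t x`. The flux `m_t v_t` of
the mixture is `(1-γ) p̂_t v̂_t + γ p̃_t ṽ_t`, and the continuity equation is linear in the pair
(density, flux), so it passes to the mixture. The Bellman identity is linearity of `withDensity`
in the density. -/

open Function InnerProductSpace

theorem ENNReal.ofReal_mul_nnnorm_sq_mul_ofReal {E : Type*} [SeminormedAddCommGroup E] {c : ℝ}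
    (hc : 0 ≤ c) (u : E) (p : ℝ) :
    ENNReal.ofReal c * ((‖u‖₊ : ℝ≥0∞) ^ 2 * ENNReal.ofReal p)
      = ENNReal.ofReal (c * (‖u‖ ^ 2 * p)) := by
  rw [← enorm_eq_nnnorm, ← ofReal_norm, ← ENNReal.ofReal_pow (norm_nonneg _),
    ← ENNReal.ofReal_mul (by positivity), ← ENNReal.ofReal_mul hc]

section Barycenter

variable {E : Type*} [NormedAddCommGroup E] [InnerProductSpace ℝ E]

theorem weighted_sq_dist_barycenter_le {α β : ℝ} (hαβ : 0 < α + β) (a b w : E) :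
    α * ‖(α + β)⁻¹ • (α • a + β • b) - a‖ ^ 2 + β * ‖(α + β)⁻¹ • (α • a + β • b) - b‖ ^ 2
      ≤ α * ‖w - a‖ ^ 2 + β * ‖w - b‖ ^ 2 := by
  set u := (α + β)⁻¹ • (α • a + β • b)
  have hbalance : α • (a - u) + β • (b - u) = 0 := by
    rw [smul_sub, smul_sub, sub_add_sub_comm, ← add_smul, smul_inv_smul₀ hαβ.ne', sub_self]
  have hcross : α * ⟪w - u, a - u⟫_ℝ + β * ⟪w - u, b - u⟫_ℝ = 0 := by
    rw [← real_inner_smul_right, ← real_inner_smul_right, ← inner_add_right, hbalance,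
      inner_zero_right]
  -- Pythagoras around the barycenter: the cross terms cancel by `hbalance`.
  have hpythagoras : α * ‖w - a‖ ^ 2 + β * ‖w - b‖ ^ 2
      = α * ‖u - a‖ ^ 2 + β * ‖u - b‖ ^ 2 + (α + β) * ‖w - u‖ ^ 2 := by
    rw [show w - a = (w - u) - (a - u) by abel, show w - b = (w - u) - (b - u) by abel,
      norm_sub_sq_real (w - u) (a - u), norm_sub_sq_real (w - u) (b - u), norm_sub_rev u a,
      norm_sub_rev u b]
    linear_combination (-2) * hcross
  rw [hpythagoras]
  linarith [mul_nonneg hαβ.le (sq_nonneg ‖w - u‖)]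

theorem weighted_enorm_sq_barycenter_le {c₁ c₂ p₁ p₂ : ℝ} (hc₁ : 0 ≤ c₁) (hc₂ : 0 ≤ c₂)
    (hp₁ : 0 ≤ p₁) (hp₂ : 0 ≤ p₂) (hpos : 0 < c₁ * p₁ + c₂ * p₂) (a b w : E) :
    ENNReal.ofReal c₁ *
        ((‖(c₁ * p₁ + c₂ * p₂)⁻¹ • ((c₁ * p₁) • a + (c₂ * p₂) • b) - a‖₊ : ℝ≥0∞) ^ 2 *
          ENNReal.ofReal p₁)
      + ENNReal.ofReal c₂ *
        ((‖(c₁ * p₁ + c₂ * p₂)⁻¹ • ((c₁ * p₁) • a + (c₂ * p₂) • b) - b‖₊ : ℝ≥0∞) ^ 2 *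
          ENNReal.ofReal p₂)
      ≤ ENNReal.ofReal c₁ * ((‖w - a‖₊ : ℝ≥0∞) ^ 2 * ENNReal.ofReal p₁)
        + ENNReal.ofReal c₂ * ((‖w - b‖₊ : ℝ≥0∞) ^ 2 * ENNReal.ofReal p₂) := by
  simp only [ENNReal.ofReal_mul_nnnorm_sq_mul_ofReal hc₁,
    ENNReal.ofReal_mul_nnnorm_sq_mul_ofReal hc₂]
  rw [← ENNReal.ofReal_add (by positivity) (by positivity),
    ← ENNReal.ofReal_add (by positivity) (by positivity)]
  refine ENNReal.ofReal_le_ofReal ?_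
  linear_combination weighted_sq_dist_barycenter_le hpos a b w

end Barycenter

theorem lintegral_weighted_add_le {X : Type*} [MeasurableSpace X] {μ : Measure X}
    {c₁ c₂ : ℝ≥0∞} {f₁ f₂ g₁ g₂ : X → ℝ≥0∞} (hg₁ : AEMeasurable g₁ μ) (hg₂ : AEMeasurable g₂ μ)
    (h : ∀ x, c₁ * f₁ x + c₂ * f₂ x ≤ c₁ * g₁ x + c₂ * g₂ x) :
    c₁ * ∫⁻ x, f₁ x ∂μ + c₂ * ∫⁻ x, f₂ x ∂μ ≤ c₁ * ∫⁻ x, g₁ x ∂μ + c₂ * ∫⁻ x, g₂ x ∂μ :=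
  calc c₁ * ∫⁻ x, f₁ x ∂μ + c₂ * ∫⁻ x, f₂ x ∂μ
      ≤ ∫⁻ x, c₁ * f₁ x ∂μ + ∫⁻ x, c₂ * f₂ x ∂μ :=
        add_le_add (lintegral_const_mul_le _ _) (lintegral_const_mul_le _ _)
    _ ≤ ∫⁻ x, c₁ * f₁ x + c₂ * f₂ x ∂μ := le_lintegral_add _ _
    _ ≤ ∫⁻ x, c₁ * g₁ x + c₂ * g₂ x ∂μ := lintegral_mono h
    _ = c₁ * ∫⁻ x, g₁ x ∂μ + c₂ * ∫⁻ x, g₂ x ∂μ := by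
        rw [lintegral_add_left' (hg₁.const_mul c₁), lintegral_const_mul'' _ hg₁,
          lintegral_const_mul'' _ hg₂]

theorem withDensity_ofReal_add {X : Type*} [MeasurableSpace X] (μ : Measure X) {c₁ c₂ : ℝ}
    {f₁ f₂ : X → ℝ} (hc₁ : 0 ≤ c₁) (hc₂ : 0 ≤ c₂) (hf₁ : Measurable f₁) (hf₁0 : ∀ x, 0 ≤ f₁ x)
    (hf₂0 : ∀ x, 0 ≤ f₂ x) :
    μ.withDensity (fun x => ENNReal.ofReal (c₁ * f₁ x + c₂ * f₂ x))
      = ENNReal.ofReal c₁ • μ.withDensity (fun x => ENNReal.ofReal (f₁ x))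
        + ENNReal.ofReal c₂ • μ.withDensity (fun x => ENNReal.ofReal (f₂ x)) := by
  have hsplit : (fun x => ENNReal.ofReal (c₁ * f₁ x + c₂ * f₂ x))
      = ENNReal.ofReal c₁ • (fun x => ENNReal.ofReal (f₁ x))
        + ENNReal.ofReal c₂ • (fun x => ENNReal.ofReal (f₂ x)) := by
    funext x
    rw [Pi.add_apply, Pi.smul_apply, Pi.smul_apply, smul_eq_mul, smul_eq_mul,
      ENNReal.ofReal_add (mul_nonneg hc₁ (hf₁0 x)) (mul_nonneg hc₂ (hf₂0 x)),
      ENNReal.ofReal_mul hc₁, ENNReal.ofReal_mul hc₂]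
  rw [hsplit, withDensity_add_left (hf₁.ennreal_ofReal.const_smul _),
    withDensity_smul' _ _ ENNReal.ofReal_ne_top, withDensity_smul' _ _ ENNReal.ofReal_ne_top]

section Slices

variable {E F G : Type*} [NormedAddCommGroup E] [NormedSpace ℝ E] [NormedAddCommGroup F]
  [NormedSpace ℝ F] [NormedAddCommGroup G] [NormedSpace ℝ G]

theorem Differentiable.uncurry_left {f : E → F → G} (x : E) (h : Differentiable ℝ (uncurry f)) :
    Differentiable ℝ (f x) := fun y =>
  (h (x, y)).comp y ((differentiableAt_const x).prodMk differentiableAt_id)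

theorem Differentiable.uncurry_right {f : E → F → G} (y : F) (h : Differentiable ℝ (uncurry f)) :
    Differentiable ℝ fun x => f x y := fun x =>
  (h (x, y)).comp (f := fun x => (x, y)) x
    (differentiableAt_id.prodMk (differentiableAt_const y))

end Slices

section ContinuityEquation

variable {d : ℕ}

theorem diverg_add {F G : EuclideanSpace ℝ (Fin d) → EuclideanSpace ℝ (Fin d)}
    {x : EuclideanSpace ℝ (Fin d)} (hF : DifferentiableAt ℝ F x) (hG : DifferentiableAt ℝ G x) :
    diverg (fun y => F y + G y) x = diverg F x + diverg G x := by
  simp only [diverg, fderiv_fun_add hF hG, add_apply, PiLp.add_apply,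
    Finset.sum_add_distrib]

theorem diverg_const_smul {F : EuclideanSpace ℝ (Fin d) → EuclideanSpace ℝ (Fin d)}
    {x : EuclideanSpace ℝ (Fin d)} (hF : DifferentiableAt ℝ F x) (c : ℝ) :
    diverg (fun y => c • F y) x = c * diverg F x := by
  simp only [diverg, fderiv_fun_const_smul hF, smul_apply, PiLp.smul_apply,
    smul_eq_mul, Finset.mul_sum]

def ContinuityEquationAt (p : ℝ → EuclideanSpace ℝ (Fin d) → ℝ)
    (v : ℝ → EuclideanSpace ℝ (Fin d) → EuclideanSpace ℝ (Fin d)) (t : ℝ)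
    (x : EuclideanSpace ℝ (Fin d)) : Prop :=
  deriv (fun τ => p τ x) t + diverg (fun y => p t y • v t y) x = 0

theorem ContinuityEquationAt.mixture {p q : ℝ → EuclideanSpace ℝ (Fin d) → ℝ}
    {u w : ℝ → EuclideanSpace ℝ (Fin d) → EuclideanSpace ℝ (Fin d)} {t : ℝ}
    {x : EuclideanSpace ℝ (Fin d)} (α β : ℝ)
    (hp : DifferentiableAt ℝ (fun τ => p τ x) t) (hq : DifferentiableAt ℝ (fun τ => q τ x) t)
    (hpu : DifferentiableAt ℝ (fun y => p t y • u t y) x)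
    (hqw : DifferentiableAt ℝ (fun y => q t y • w t y) x)
    (hmix : ∀ y, α * p t y + β * q t y ≠ 0)
    (hpu_eq : ContinuityEquationAt p u t x) (hqw_eq : ContinuityEquationAt q w t x) :
    ContinuityEquationAt (fun τ y => α * p τ y + β * q τ y)
      (fun τ y => (α * p τ y + β * q τ y)⁻¹ • ((α * p τ y) • u τ y + (β * q τ y) • w τ y))
      t x := by
  have hflux : (fun y => (α * p t y + β * q t y) •
        ((α * p t y + β * q t y)⁻¹ • ((α * p t y) • u t y + (β * q t y) • w t y)))
      = fun y => α • (p t y • u t y) + β • (q t y • w t y) := by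
    funext y
    rw [smul_inv_smul₀ (hmix y), mul_smul, mul_smul]
  unfold ContinuityEquationAt at *
  rw [hflux, deriv_fun_add (hp.const_mul α) (hq.const_mul β), deriv_const_mul _ hp,
    deriv_const_mul _ hq, diverg_add (hpu.fun_const_smul α) (hqw.fun_const_smul β),
    diverg_const_smul hpu, diverg_const_smul hqw]
  linear_combination α * hpu_eq + β * hqw_eq

end ContinuityEquation

theorem mixture_vector_field_minimizes_and_generates_bellman_update_general
    {d : ℕ} {𝒜 : Type*}
    (γ : ℝ) (hγ0 : 0 ≤ γ) (hγ1 : γ ≤ 1)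
    (m₀ : EuclideanSpace ℝ (Fin d) → ℝ)
    (phat ptil : ℝ → EuclideanSpace ℝ (Fin d) → ℝ)
    (vhat vtil : ℝ → EuclideanSpace ℝ (Fin d) → EuclideanSpace ℝ (Fin d))
    (hphatC1 : ContDiff ℝ 1 fun q : ℝ × EuclideanSpace ℝ (Fin d) => phat q.1 q.2)
    (hptilC1 : ContDiff ℝ 1 fun q : ℝ × EuclideanSpace ℝ (Fin d) => ptil q.1 q.2)
    (hvhatC1 : ContDiff ℝ 1 fun q : ℝ × EuclideanSpace ℝ (Fin d) => vhat q.1 q.2)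
    (hvtilC1 : ContDiff ℝ 1 fun q : ℝ × EuclideanSpace ℝ (Fin d) => vtil q.1 q.2)
    (hphatnn : ∀ t x, 0 ≤ phat t x) (hptilnn : ∀ t x, 0 ≤ ptil t x)
    -- the vector fields generate the paths via the continuity equation
    (hgenhat : ∀ t ∈ Set.Ioo (0 : ℝ) 1, ∀ x,
      deriv (fun τ => phat τ x) t + diverg (fun y => phat t y • vhat t y) x = 0)
    (hgentil : ∀ t ∈ Set.Ioo (0 : ℝ) 1, ∀ x,
      deriv (fun τ => ptil τ x) t + diverg (fun y => ptil t y • vtil t y) x = 0)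
    -- common source
    (hsource : ∀ x, phat 0 x = m₀ x ∧ ptil 0 x = m₀ x)
    -- positivity of the mixture and finite second moments of the fields
    (hpos : ∀ t x, 0 < (1 - γ) * phat t x + γ * ptil t x)
    -- the mixture field and path
    (v : ℝ → EuclideanSpace ℝ (Fin d) → EuclideanSpace ℝ (Fin d))
    (hv : ∀ t x, v t x = ((1 - γ) * phat t x + γ * ptil t x)⁻¹ •
        (((1 - γ) * phat t x) • vhat t x + (γ * ptil t x) • vtil t x))
    (m : ℝ → EuclideanSpace ℝ (Fin d) → ℝ)
    (hm : ∀ t x, m t x = (1 - γ) * phat t x + γ * ptil t x)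
    -- MDP data for the Bellman interpretation
    (P : EuclideanSpace ℝ (Fin d) × 𝒜 → Measure (EuclideanSpace ℝ (Fin d)))
    (π : EuclideanSpace ℝ (Fin d) → 𝒜)
    (mprev : EuclideanSpace ℝ (Fin d) × 𝒜 → Measure (EuclideanSpace ℝ (Fin d)))
    (s : EuclideanSpace ℝ (Fin d)) (a : 𝒜) :
    -- (i) minimization of the mixed flow-matching objective
    (∀ t ∈ Set.Icc (0 : ℝ) 1,
      ∀ w : EuclideanSpace ℝ (Fin d) → EuclideanSpace ℝ (Fin d), Measurable w →
        ENNReal.ofReal (1 - γ) *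
            (∫⁻ x, (‖v t x - vhat t x‖₊ : ℝ≥0∞) ^ (2 : ℕ) * ENNReal.ofReal (phat t x))
          + ENNReal.ofReal γ *
            (∫⁻ x, (‖v t x - vtil t x‖₊ : ℝ≥0∞) ^ (2 : ℕ) * ENNReal.ofReal (ptil t x))
        ≤ ENNReal.ofReal (1 - γ) *
            (∫⁻ x, (‖w x - vhat t x‖₊ : ℝ≥0∞) ^ (2 : ℕ) * ENNReal.ofReal (phat t x))
          + ENNReal.ofReal γ *
            (∫⁻ x, (‖w x - vtil t x‖₊ : ℝ≥0∞) ^ (2 : ℕ) * ENNReal.ofReal (ptil t x))) ∧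
    -- (ii) v generates the mixture path m
    (∀ t ∈ Set.Ioo (0 : ℝ) 1, ∀ x,
      deriv (fun τ => m τ x) t + diverg (fun y => m t y • v t y) x = 0) ∧
    (∀ x, m 0 x = m₀ x) ∧
    (∀ x, m 1 x = (1 - γ) * phat 1 x + γ * ptil 1 x) ∧
    -- in particular: the Bellman interpretation at time 1
    ((volume.withDensity fun x => ENNReal.ofReal (phat 1 x)) = P (s, a) →
      (volume.withDensity fun x => ENNReal.ofReal (ptil 1 x)) =
        (P (s, a)).bind (fun s' => mprev (s', π s')) →
      (volume.withDensity fun x => ENNReal.ofReal (m 1 x)) =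
        ENNReal.ofReal (1 - γ) • P (s, a) +
          ENNReal.ofReal γ • (P (s, a)).bind (fun s' => mprev (s', π s'))) := by
  obtain rfl : v = _ := funext₂ hv
  obtain rfl : m = _ := funext₂ hm
  have h1γ : 0 ≤ 1 - γ := sub_nonneg.mpr hγ1
  have hphat := hphatC1.differentiable one_ne_zero
  have hptil := hptilC1.differentiable one_ne_zero
  have hvhat := hvhatC1.differentiable one_ne_zero
  have hvtil := hvtilC1.differentiable one_ne_zero
  refine ⟨fun t _ w hw => ?_, fun t ht x => ?_, fun x => ?_, fun x => rfl, fun hP hPt => ?_⟩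
  · refine lintegral_weighted_add_le ?_ ?_ fun x => weighted_enorm_sq_barycenter_le h1γ hγ0
      (hphatnn t x) (hptilnn t x) (hpos t x) _ _ _
    · have := (hvhat.uncurry_left t).continuous.measurable
      have := (hphat.uncurry_left t).continuous.measurable
      fun_prop
    · have := (hvtil.uncurry_left t).continuous.measurable
      have := (hptil.uncurry_left t).continuous.measurable
      fun_prop
  · exact ContinuityEquationAt.mixture (1 - γ) γ (hphat.uncurry_right x t)
      (hptil.uncurry_right x t) ((hphat.uncurry_left t x).smul (hvhat.uncurry_left t x))
      ((hptil.uncurry_left t x).smul (hvtil.uncurry_left t x)) (fun y => (hpos t y).ne')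
      (hgenhat t ht x) (hgentil t ht x)
  · simp only [hsource]
    ring
  · rw [← hPt, ← hP]
    exact withDensity_ofReal_add volume h1γ hγ0 (hphat.uncurry_left 1).continuous.measurable
      (hphatnn 1) (hptilnn 1)

/-- The density-weighted mixture vector field (i) minimizes the mixed
flow-matching objective, and (ii) generates the mixture probability path
`m_t := (1−γ)p̂_t + γp̃_t`, which starts at `m₀` and ends at `(1−γ)p̂₁ + γp̃₁`; in particular,
if `p̂₁` is a density of the one-step kernel `P(·|s,a)` and `p̃₁` is a density of
`(P^π m₁^{prev})(·|s,a)`, then `m₁` is a density of the Bellman update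
`(T^π m₁^{prev})(·|s,a)`. -/
theorem mixture_vector_field_minimizes_and_generates_bellman_update
    {d : ℕ} {𝒜 : Type*} [MeasurableSpace 𝒜]
    (γ : ℝ) (hγ0 : 0 ≤ γ) (hγ1 : γ ≤ 1)
    (m₀ : EuclideanSpace ℝ (Fin d) → ℝ)
    (hm₀nn : ∀ x, 0 ≤ m₀ x) (hm₀int : (∫ x, m₀ x) = 1)
    (phat ptil : ℝ → EuclideanSpace ℝ (Fin d) → ℝ)
    (vhat vtil : ℝ → EuclideanSpace ℝ (Fin d) → EuclideanSpace ℝ (Fin d))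
    (hphatC1 : ContDiff ℝ 1 fun q : ℝ × EuclideanSpace ℝ (Fin d) => phat q.1 q.2)
    (hptilC1 : ContDiff ℝ 1 fun q : ℝ × EuclideanSpace ℝ (Fin d) => ptil q.1 q.2)
    (hvhatC1 : ContDiff ℝ 1 fun q : ℝ × EuclideanSpace ℝ (Fin d) => vhat q.1 q.2)
    (hvtilC1 : ContDiff ℝ 1 fun q : ℝ × EuclideanSpace ℝ (Fin d) => vtil q.1 q.2)
    (hphatnn : ∀ t x, 0 ≤ phat t x) (hptilnn : ∀ t x, 0 ≤ ptil t x)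
    (hphatint : ∀ t, (∫ x, phat t x) = 1) (hptilint : ∀ t, (∫ x, ptil t x) = 1)
    -- the vector fields generate the paths via the continuity equation
    (hgenhat : ∀ t ∈ Set.Ioo (0 : ℝ) 1, ∀ x,
      deriv (fun τ => phat τ x) t + diverg (fun y => phat t y • vhat t y) x = 0)
    (hgentil : ∀ t ∈ Set.Ioo (0 : ℝ) 1, ∀ x,
      deriv (fun τ => ptil τ x) t + diverg (fun y => ptil t y • vtil t y) x = 0)
    -- common source
    (hsource : ∀ x, phat 0 x = m₀ x ∧ ptil 0 x = m₀ x)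
    -- positivity of the mixture and finite second moments of the fields
    (hpos : ∀ t x, 0 < (1 - γ) * phat t x + γ * ptil t x)
    (hvhatL2 : ∀ t, (∫⁻ x, (‖vhat t x‖₊ : ℝ≥0∞) ^ (2 : ℕ) * ENNReal.ofReal (phat t x)) < ⊤)
    (hvtilL2 : ∀ t, (∫⁻ x, (‖vtil t x‖₊ : ℝ≥0∞) ^ (2 : ℕ) * ENNReal.ofReal (ptil t x)) < ⊤)
    -- the mixture field and path
    (v : ℝ → EuclideanSpace ℝ (Fin d) → EuclideanSpace ℝ (Fin d))
    (hv : ∀ t x, v t x = ((1 - γ) * phat t x + γ * ptil t x)⁻¹ •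
        (((1 - γ) * phat t x) • vhat t x + (γ * ptil t x) • vtil t x))
    (m : ℝ → EuclideanSpace ℝ (Fin d) → ℝ)
    (hm : ∀ t x, m t x = (1 - γ) * phat t x + γ * ptil t x)
    -- MDP data for the Bellman interpretation
    (P : EuclideanSpace ℝ (Fin d) × 𝒜 → Measure (EuclideanSpace ℝ (Fin d)))
    (hPmeas : Measurable P) (hPprob : ∀ sa, IsProbabilityMeasure (P sa))
    (π : EuclideanSpace ℝ (Fin d) → 𝒜) (hπ : Measurable π)
    (mprev : EuclideanSpace ℝ (Fin d) × 𝒜 → Measure (EuclideanSpace ℝ (Fin d)))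
    (hmprev : Measurable mprev) (hmprevprob : ∀ sa, IsProbabilityMeasure (mprev sa))
    (s : EuclideanSpace ℝ (Fin d)) (a : 𝒜) :
    -- (i) minimization of the mixed flow-matching objective
    (∀ t ∈ Set.Icc (0 : ℝ) 1,
      ∀ w : EuclideanSpace ℝ (Fin d) → EuclideanSpace ℝ (Fin d), Measurable w →
        ENNReal.ofReal (1 - γ) *
            (∫⁻ x, (‖v t x - vhat t x‖₊ : ℝ≥0∞) ^ (2 : ℕ) * ENNReal.ofReal (phat t x))
          + ENNReal.ofReal γ *
            (∫⁻ x, (‖v t x - vtil t x‖₊ : ℝ≥0∞) ^ (2 : ℕ) * ENNReal.ofReal (ptil t x))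
        ≤ ENNReal.ofReal (1 - γ) *
            (∫⁻ x, (‖w x - vhat t x‖₊ : ℝ≥0∞) ^ (2 : ℕ) * ENNReal.ofReal (phat t x))
          + ENNReal.ofReal γ *
            (∫⁻ x, (‖w x - vtil t x‖₊ : ℝ≥0∞) ^ (2 : ℕ) * ENNReal.ofReal (ptil t x))) ∧
    -- (ii) v generates the mixture path m
    (∀ t ∈ Set.Ioo (0 : ℝ) 1, ∀ x,
      deriv (fun τ => m τ x) t + diverg (fun y => m t y • v t y) x = 0) ∧
    (∀ x, m 0 x = m₀ x) ∧
    (∀ x, m 1 x = (1 - γ) * phat 1 x + γ * ptil 1 x) ∧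
    -- in particular: the Bellman interpretation at time 1
    ((volume.withDensity fun x => ENNReal.ofReal (phat 1 x)) = P (s, a) →
      (volume.withDensity fun x => ENNReal.ofReal (ptil 1 x)) =
        (P (s, a)).bind (fun s' => mprev (s', π s')) →
      (volume.withDensity fun x => ENNReal.ofReal (m 1 x)) =
        ENNReal.ofReal (1 - γ) • P (s, a) +
          ENNReal.ofReal γ • (P (s, a)).bind (fun s' => mprev (s', π s'))) :=
  mixture_vector_field_minimizes_and_generates_bellman_update_general γ hγ0 hγ1 m₀ phat ptil vhat
    vtil hphatC1 hptilC1 hvhatC1 hvtilC1 hphatnn hptilnn hgenhat hgentil hsource hpos v hv m hm P π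
    mprev s a
end
end

section
/- Fix t ∈ [0,1], k ∈ [1,∞) and γ ∈ [0,1). Let p, q : S×A → P(S) be measurable families of probability measures with finite k-th moments, and suppose that for every ε > 0 there exists a jointly measurable family Γ̃_ε(·|s,a) of couplings of p(·|s,a) and q(·|s,a) such that (∫‖x−y‖^k dΓ̃_ε(x,y|s,a))^{1/k} ≤ W_k(p(·|s,a), q(·|s,a)) + ε for all (s,a). Then sup_{s,a} W_k((B_t^π p)(·|s,a), (B_t^π q)(·|s,a)) ≤ γ^{1/k} · sup_{s,a} W_k(p(·|s,a), q(·|s,a)); that is, the probability-path Bellman operator B_t^π is a γ^{1/k}-contraction in the supremum k-Wasserstein distance. -/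
open MeasureTheory
open scoped ENNReal NNReal

noncomputable section

/-- The state space `S = ℝ^d`. -/
abbrev St (d : ℕ) := EuclideanSpace ℝ (Fin d)

/-- `(P^π m)(·|s,a) := ∫ m(·|s',π(s')) P(ds'|s,a)`. -/
def Ppi {d : ℕ} {𝒜 : Type*} [MeasurableSpace 𝒜]
    (P : St d × 𝒜 → Measure (St d)) (π : St d → 𝒜)
    (m : St d × 𝒜 → Measure (St d)) : St d × 𝒜 → Measure (St d) :=
  fun sa => (P sa).bind fun s' => m (s', π s')

/-- `P_t(·|s,a) := ∫ p_{t|1}(·|x₁) P(dx₁|s,a)` for a conditional path kernel `p_{t|1}`. -/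
def Pt {d : ℕ} {𝒜 : Type*} [MeasurableSpace 𝒜]
    (P : St d × 𝒜 → Measure (St d)) (κ : St d → Measure (St d)) :
    St d × 𝒜 → Measure (St d) :=
  fun sa => (P sa).bind κ

/-- The probability-path Bellman operator
`(B_t^π m)(·|s,a) := (1−γ) P_t(·|s,a) + γ (P^π m)(·|s,a)`. -/
def Bpath {d : ℕ} {𝒜 : Type*} [MeasurableSpace 𝒜] (γ : ℝ)
    (P : St d × 𝒜 → Measure (St d)) (π : St d → 𝒜) (κ : St d → Measure (St d))
    (m : St d × 𝒜 → Measure (St d)) : St d × 𝒜 → Measure (St d) :=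
  fun sa => ENNReal.ofReal (1 - γ) • Pt P κ sa + ENNReal.ofReal γ • Ppi P π m sa

/-- `Γ` is a coupling of `μ` and `ν`: a measure on the product whose marginals are `μ`, `ν`. -/
def IsCoupling {d : ℕ} (Γ : Measure (St d × St d)) (μ ν : Measure (St d)) : Prop :=
  Γ.map Prod.fst = μ ∧ Γ.map Prod.snd = ν

/-- The `k`-Wasserstein distance for the Euclidean distance on `ℝ^d`. -/
def Wk {d : ℕ} (k : ℝ) (μ ν : Measure (St d)) : ℝ≥0∞ :=
  ⨅ (Γ : Measure (St d × St d)) (_ : IsProbabilityMeasure Γ) (_ : IsCoupling Γ μ ν),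
    (∫⁻ p, edist p.1 p.2 ^ k ∂Γ) ^ (1 / k)

/-!
Given couplings `Γ(·|s,a)` of `p(·|s,a)` and `q(·|s,a)`, the measure
`(1 − γ) · (diagonal coupling of P_t(·|s,a)) + γ · ∫ Γ(·|s',π s') P(ds'|s,a)`
couples `(B_t^π p)(·|s,a)` and `(B_t^π q)(·|s,a)`. The diagonal part transports nothing, so the
`k`-th transport cost of this coupling is at most `γ · (sup W_k(p, q) + ε)^k` when the `Γ` are
`ε`-optimal; take `k`-th roots and let `ε → 0`.
-/

open Filter Topology in
lemma ENNReal.le_mul_of_forall_pos_le_mul_add {a b c : ℝ≥0∞} (hc : c ≠ ⊤)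
    (h : ∀ ε : ℝ≥0∞, 0 < ε → a ≤ c * (b + ε)) : a ≤ c * b := by
  have hlim : Tendsto (fun ε => c * (b + ε)) (𝓝[>] 0) (𝓝 (c * (b + 0))) :=
    (ENNReal.Tendsto.const_mul (tendsto_const_nhds.add tendsto_id) (Or.inr hc)).mono_left
      nhdsWithin_le_nhds
  rw [add_zero] at hlim
  exact ge_of_tendsto hlim (eventually_nhdsWithin_of_forall h)

namespace MeasureTheory.Measure

variable {α β δ : Type*} [MeasurableSpace α] [MeasurableSpace β] [MeasurableSpace δ]

lemma map_bind (μ : Measure α) {κ : α → Measure β} (hκ : Measurable κ) {f : β → δ}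
    (hf : Measurable f) : (μ.bind κ).map f = μ.bind fun a => (κ a).map f := by
  have hκf : Measurable fun a => (κ a).map f := (measurable_map f hf).comp hκ
  ext s hs
  rw [map_apply hf hs, bind_apply (hf hs) hκ.aemeasurable, bind_apply hs hκf.aemeasurable]
  simp_rw [map_apply hf hs]

lemma lintegral_bind_le_of_forall_le {μ : Measure α} [IsProbabilityMeasure μ]
    {κ : α → Measure β} {f : β → ℝ≥0∞} {C : ℝ≥0∞} (h : ∀ a, ∫⁻ x, f x ∂κ a ≤ C) :
    ∫⁻ x, f x ∂μ.bind κ ≤ C :=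
  calc ∫⁻ x, f x ∂μ.bind κ ≤ ∫⁻ a, ∫⁻ x, f x ∂κ a ∂μ := lintegral_bind_le f μ κ
    _ ≤ ∫⁻ _, C ∂μ := lintegral_mono h
    _ = C := by simp

lemma isProbabilityMeasure_ofReal_smul_add {γ : ℝ} (hγ0 : 0 ≤ γ) (hγ1 : γ ≤ 1)
    (μ ν : Measure α) [IsProbabilityMeasure μ] [IsProbabilityMeasure ν] :
    IsProbabilityMeasure (ENNReal.ofReal (1 - γ) • μ + ENNReal.ofReal γ • ν) := by
  constructor
  simp only [add_apply, smul_apply, smul_eq_mul, measure_univ, mul_one]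
  rw [← ENNReal.ofReal_add (by linarith) hγ0, sub_add_cancel, ENNReal.ofReal_one]

end MeasureTheory.Measure

lemma lintegral_edist_rpow_map_diag {X : Type*} [PseudoEMetricSpace X] [MeasurableSpace X]
    {k : ℝ} (hk : 0 < k) (μ : Measure X) :
    ∫⁻ x, edist x.1 x.2 ^ k ∂μ.map (fun x => (x, x)) = 0 :=
  le_antisymm ((lintegral_map_le _ _).trans (by simp [ENNReal.zero_rpow_of_pos hk])) bot_le

section Coupling

variable {d : ℕ}

lemma IsCoupling.add {Γ₁ Γ₂ : Measure (St d × St d)} {μ₁ μ₂ ν₁ ν₂ : Measure (St d)}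
    (h₁ : IsCoupling Γ₁ μ₁ ν₁) (h₂ : IsCoupling Γ₂ μ₂ ν₂) :
    IsCoupling (Γ₁ + Γ₂) (μ₁ + μ₂) (ν₁ + ν₂) := by
  simp only [IsCoupling, Measure.map_add _ _ measurable_fst, Measure.map_add _ _ measurable_snd,
    h₁.1, h₁.2, h₂.1, h₂.2, and_self]

lemma IsCoupling.smul {Γ : Measure (St d × St d)} {μ ν : Measure (St d)} (h : IsCoupling Γ μ ν)
    (c : ℝ≥0∞) : IsCoupling (c • Γ) (c • μ) (c • ν) := by
  simp only [IsCoupling, Measure.map_smul, h.1, h.2, and_self]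

lemma isCoupling_map_diag (μ : Measure (St d)) :
    IsCoupling (μ.map fun x => (x, x)) μ μ := by
  have hdiag : Measurable fun x : St d => (x, x) := measurable_id.prodMk measurable_id
  exact ⟨(Measure.map_map measurable_fst hdiag).trans Measure.map_id,
    (Measure.map_map measurable_snd hdiag).trans Measure.map_id⟩

lemma IsCoupling.bind {α : Type*} [MeasurableSpace α] (μ : Measure α)
    {Γ : α → Measure (St d × St d)} (hΓ : Measurable Γ) {m n : α → Measure (St d)}
    (h : ∀ a, IsCoupling (Γ a) (m a) (n a)) : IsCoupling (μ.bind Γ) (μ.bind m) (μ.bind n) := by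
  constructor
  · rw [Measure.map_bind μ hΓ measurable_fst]
    simp only [(h _).1]
  · rw [Measure.map_bind μ hΓ measurable_snd]
    simp only [(h _).2]

lemma Wk_le_of_isCoupling {k : ℝ} {μ ν : Measure (St d)} {Γ : Measure (St d × St d)}
    [hΓ : IsProbabilityMeasure Γ] (h : IsCoupling Γ μ ν) :
    Wk k μ ν ≤ (∫⁻ x, edist x.1 x.2 ^ k ∂Γ) ^ (1 / k) :=
  iInf_le_of_le Γ (iInf_le_of_le hΓ (iInf_le _ h))

end Coupling

section BellmanCoupling

variable {d : ℕ} {𝒜 : Type*} [MeasurableSpace 𝒜] {γ : ℝ} {P : St d × 𝒜 → Measure (St d)}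
  {π : St d → 𝒜} {κ : St d → Measure (St d)} {Γ : St d × 𝒜 → Measure (St d × St d)}

def bellmanCoupling (γ : ℝ) (P : St d × 𝒜 → Measure (St d)) (π : St d → 𝒜)
    (κ : St d → Measure (St d)) (Γ : St d × 𝒜 → Measure (St d × St d)) :
    St d × 𝒜 → Measure (St d × St d) :=
  fun sa => ENNReal.ofReal (1 - γ) • (Pt P κ sa).map (fun x => (x, x)) +
    ENNReal.ofReal γ • (P sa).bind fun s' => Γ (s', π s')

lemma isCoupling_bellmanCoupling (hπ : Measurable π) (hΓ : Measurable Γ)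
    {p q : St d × 𝒜 → Measure (St d)} (hcpl : ∀ sa, IsCoupling (Γ sa) (p sa) (q sa))
    (sa : St d × 𝒜) :
    IsCoupling (bellmanCoupling γ P π κ Γ sa) (Bpath γ P π κ p sa) (Bpath γ P π κ q sa) :=
  ((isCoupling_map_diag _).smul _).add
    ((IsCoupling.bind _ (hΓ.comp (measurable_id.prodMk hπ)) fun _ => hcpl _).smul _)

lemma isProbabilityMeasure_bellmanCoupling (hγ0 : 0 ≤ γ) (hγ1 : γ ≤ 1)
    (hP : ∀ sa, IsProbabilityMeasure (P sa)) (hπ : Measurable π) (hκmeas : Measurable κ)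
    (hκ : ∀ x, IsProbabilityMeasure (κ x)) (hΓmeas : Measurable Γ)
    (hΓ : ∀ sa, IsProbabilityMeasure (Γ sa)) (sa : St d × 𝒜) :
    IsProbabilityMeasure (bellmanCoupling γ P π κ Γ sa) := by
  have : IsProbabilityMeasure (Pt P κ sa) :=
    isProbabilityMeasure_bind hκmeas.aemeasurable (.of_forall hκ)
  have : IsProbabilityMeasure ((P sa).bind fun s' => Γ (s', π s')) :=
    isProbabilityMeasure_bind (hΓmeas.comp (measurable_id.prodMk hπ)).aemeasurable
      (.of_forall fun _ => hΓ _)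
  have : IsProbabilityMeasure ((Pt P κ sa).map fun x => (x, x)) :=
    Measure.isProbabilityMeasure_map (measurable_id.prodMk measurable_id).aemeasurable
  exact Measure.isProbabilityMeasure_ofReal_smul_add hγ0 hγ1 _ _

lemma lintegral_edist_rpow_bellmanCoupling_le {k : ℝ} (hk : 0 < k)
    (hP : ∀ sa, IsProbabilityMeasure (P sa)) {C : ℝ≥0∞}
    (hC : ∀ sa, ∫⁻ x, edist x.1 x.2 ^ k ∂Γ sa ≤ C) (sa : St d × 𝒜) :
    ∫⁻ x, edist x.1 x.2 ^ k ∂bellmanCoupling γ P π κ Γ sa ≤ ENNReal.ofReal γ * C := by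
  rw [bellmanCoupling, lintegral_add_measure, lintegral_smul_measure, lintegral_smul_measure,
    lintegral_edist_rpow_map_diag hk, smul_zero, zero_add]
  have := hP sa
  exact mul_le_mul_right (Measure.lintegral_bind_le_of_forall_le fun _ => hC _) _

lemma Wk_Bpath_le {k : ℝ} (hk : 0 < k) (hγ0 : 0 ≤ γ) (hγ1 : γ ≤ 1)
    (hP : ∀ sa, IsProbabilityMeasure (P sa)) (hπ : Measurable π) (hκmeas : Measurable κ)
    (hκ : ∀ x, IsProbabilityMeasure (κ x)) (hΓmeas : Measurable Γ)
    (hΓ : ∀ sa, IsProbabilityMeasure (Γ sa)) {p q : St d × 𝒜 → Measure (St d)}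
    (hcpl : ∀ sa, IsCoupling (Γ sa) (p sa) (q sa)) {C : ℝ≥0∞}
    (hC : ∀ sa, (∫⁻ x, edist x.1 x.2 ^ k ∂Γ sa) ^ (1 / k) ≤ C) (sa : St d × 𝒜) :
    Wk k (Bpath γ P π κ p sa) (Bpath γ P π κ q sa) ≤ ENNReal.ofReal γ ^ (1 / k) * C := by
  have := isProbabilityMeasure_bellmanCoupling hγ0 hγ1 hP hπ hκmeas hκ hΓmeas hΓ sa
  have hCk : ∀ sa, ∫⁻ x, edist x.1 x.2 ^ k ∂Γ sa ≤ C ^ k := fun sa => by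
    rw [← ENNReal.rpow_inv_le_iff hk, ← one_div]
    exact hC sa
  calc Wk k (Bpath γ P π κ p sa) (Bpath γ P π κ q sa)
      ≤ (∫⁻ x, edist x.1 x.2 ^ k ∂bellmanCoupling γ P π κ Γ sa) ^ (1 / k) :=
        Wk_le_of_isCoupling (isCoupling_bellmanCoupling hπ hΓmeas hcpl sa)
    _ ≤ (ENNReal.ofReal γ * C ^ k) ^ (1 / k) := by
        gcongr
        exact lintegral_edist_rpow_bellmanCoupling_le hk hP hCk sa
    _ = ENNReal.ofReal γ ^ (1 / k) * C := by
        rw [ENNReal.mul_rpow_of_nonneg _ _ (by positivity), ← ENNReal.rpow_mul,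
          mul_one_div_cancel hk.ne', ENNReal.rpow_one]

end BellmanCoupling

theorem bellman_operator_wasserstein_contraction_general {d : ℕ} {𝒜 : Type*} [MeasurableSpace 𝒜]
    (k : ℝ) (hk : 1 ≤ k)
    (γ : ℝ) (hγ0 : 0 ≤ γ) (hγ1 : γ < 1)
    (P : St d × 𝒜 → Measure (St d))
    (hPprob : ∀ sa, IsProbabilityMeasure (P sa))
    (π : St d → 𝒜) (hπ : Measurable π)
    (κ : St d → Measure (St d)) (hκmeas : Measurable κ)
    (hκprob : ∀ x, IsProbabilityMeasure (κ x))
    (p q : St d × 𝒜 → Measure (St d))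
    -- jointly measurable families of ε-optimal couplings
    (hcpl : ∀ ε : ℝ≥0∞, 0 < ε → ∃ Γ : St d × 𝒜 → Measure (St d × St d),
      Measurable Γ ∧ (∀ sa, IsProbabilityMeasure (Γ sa)) ∧
      (∀ sa, IsCoupling (Γ sa) (p sa) (q sa)) ∧
      ∀ sa, (∫⁻ pr, edist pr.1 pr.2 ^ k ∂Γ sa) ^ (1 / k) ≤ Wk k (p sa) (q sa) + ε) :
    (⨆ sa : St d × 𝒜, Wk k (Bpath γ P π κ p sa) (Bpath γ P π κ q sa)) ≤
      ENNReal.ofReal γ ^ (1 / k) * ⨆ sa : St d × 𝒜, Wk k (p sa) (q sa) := by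
  have hk0 : 0 < k := by linarith
  refine ENNReal.le_mul_of_forall_pos_le_mul_add
    (ENNReal.rpow_ne_top_of_nonneg (by positivity) ENNReal.ofReal_ne_top) fun ε hε => ?_
  obtain ⟨Γ, hΓmeas, hΓprob, hΓcpl, hΓcost⟩ := hcpl ε hε
  have hC : ∀ sa, (∫⁻ x, edist x.1 x.2 ^ k ∂Γ sa) ^ (1 / k) ≤ (⨆ sa, Wk k (p sa) (q sa)) + ε :=
    fun sa => (hΓcost sa).trans (add_le_add_left (le_iSup (fun sa => Wk k (p sa) (q sa)) sa) ε)
  exact iSup_le (Wk_Bpath_le hk0 hγ0 hγ1.le hPprob hπ hκmeas hκprob hΓmeas hΓprob hΓcpl hC)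

/-- The probability-path Bellman operator `B_t^π` is a `γ^{1/k}`-contraction
in the supremum `k`-Wasserstein distance. -/
theorem bellman_operator_wasserstein_contraction {d : ℕ} {𝒜 : Type*} [MeasurableSpace 𝒜]
    (t : ℝ) (ht : t ∈ Set.Icc (0 : ℝ) 1)
    (k : ℝ) (hk : 1 ≤ k)
    (γ : ℝ) (hγ0 : 0 ≤ γ) (hγ1 : γ < 1)
    (P : St d × 𝒜 → Measure (St d)) (hPmeas : Measurable P)
    (hPprob : ∀ sa, IsProbabilityMeasure (P sa))
    (π : St d → 𝒜) (hπ : Measurable π)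
    (κ : St d → Measure (St d)) (hκmeas : Measurable κ)
    (hκprob : ∀ x, IsProbabilityMeasure (κ x))
    (p q : St d × 𝒜 → Measure (St d))
    (hpmeas : Measurable p) (hqmeas : Measurable q)
    (hpprob : ∀ sa, IsProbabilityMeasure (p sa)) (hqprob : ∀ sa, IsProbabilityMeasure (q sa))
    -- finite k-th moments
    (hpmom : ∀ sa, (∫⁻ x, (‖x‖₊ : ℝ≥0∞) ^ k ∂p sa) < ⊤)
    (hqmom : ∀ sa, (∫⁻ x, (‖x‖₊ : ℝ≥0∞) ^ k ∂q sa) < ⊤)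
    -- jointly measurable families of ε-optimal couplings
    (hcpl : ∀ ε : ℝ≥0∞, 0 < ε → ∃ Γ : St d × 𝒜 → Measure (St d × St d),
      Measurable Γ ∧ (∀ sa, IsProbabilityMeasure (Γ sa)) ∧
      (∀ sa, IsCoupling (Γ sa) (p sa) (q sa)) ∧
      ∀ sa, (∫⁻ pr, edist pr.1 pr.2 ^ k ∂Γ sa) ^ (1 / k) ≤ Wk k (p sa) (q sa) + ε) :
    (⨆ sa : St d × 𝒜, Wk k (Bpath γ P π κ p sa) (Bpath γ P π κ q sa)) ≤
      ENNReal.ofReal γ ^ (1 / k) * ⨆ sa : St d × 𝒜, Wk k (p sa) (q sa) :=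
  bellman_operator_wasserstein_contraction_general k hk γ hγ0 hγ1 P hPprob π hπ κ hκmeas hκprob p q
    hcpl
end
end

section
/- Fix t ∈ [0,1] and γ ∈ [0,1). Let m₁ : S×A → P(S) be a measurable family of probability measures and define its time-t marginal path m_t(·|s,a) := ∫ p_{t|1}(·|x₁) m₁(dx₁|s,a). Then the time-t marginal path of the Bellman update of m₁ satisfies, for all (s,a): ∫ p_{t|1}(·|x₁) (T^π m₁)(dx₁|s,a) = (B_t^π m_t)(·|s,a) = (1−γ)P_t(·|s,a) + γ∫ m_t(·|s',π(s')) P(ds'|s,a). Consequently, whenever the probability path at iteration n of TD-Conditional Flow Matching is in marginal form over its time-1 distribution m₁^{(n)}, the next-iterate probability path m_t^{(n+1)}(·|s,a) := ∫ p_{t|1}(·|x₁) (T^π m₁^{(n)})(dx₁|s,a) equals (B_t^π m_t^{(n)})(·|s,a). -/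
open MeasureTheory
open scoped ENNReal NNReal

noncomputable section

/-- The Bellman operator `(T^π m)(·|s,a) := (1−γ) P(·|s,a) + γ (P^π m)(·|s,a)`. -/
def Tpi {d : ℕ} {𝒜 : Type*} [MeasurableSpace 𝒜] (γ : ℝ)
    (P : St d × 𝒜 → Measure (St d)) (π : St d → 𝒜)
    (m : St d × 𝒜 → Measure (St d)) : St d × 𝒜 → Measure (St d) :=
  fun sa => ENNReal.ofReal (1 - γ) • P sa + ENNReal.ofReal γ • Ppi P π m sa

/-! Pushing a measure through the kernel `κ` is additive and ℝ≥0∞-linear in the measure, and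
associative with the Bellman kernel `P^π` (Giry monad law), so it commutes with both terms of `T^π`. -/

theorem MeasureTheory.Measure.bind_add {α β : Type*} [MeasurableSpace α] [MeasurableSpace β]
    (μ ν : Measure α) {f : α → Measure β} (hf : Measurable f) :
    (μ + ν).bind f = μ.bind f + ν.bind f := by
  ext s hs
  simp only [Measure.add_apply, Measure.bind_apply hs hf.aemeasurable, lintegral_add_measure]

theorem Ppi_bind {d : ℕ} {𝒜 : Type*} [MeasurableSpace 𝒜]
    (P : St d × 𝒜 → Measure (St d)) {π : St d → 𝒜} (hπ : Measurable π)
    {m : St d × 𝒜 → Measure (St d)} (hm : Measurable m)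
    {κ : St d → Measure (St d)} (hκ : Measurable κ) (sa : St d × 𝒜) :
    (Ppi P π m sa).bind κ = Ppi P π (fun sa' => (m sa').bind κ) sa :=
  Measure.bind_bind (hm.comp (measurable_id.prodMk hπ)).aemeasurable hκ.aemeasurable

theorem marginal_path_of_bellman_update_general {d : ℕ} {𝒜 : Type*} [MeasurableSpace 𝒜]
    (γ : ℝ)
    (P : St d × 𝒜 → Measure (St d))
    (π : St d → 𝒜) (hπ : Measurable π)
    (κ : St d → Measure (St d)) (hκmeas : Measurable κ)
    (m₁ : St d × 𝒜 → Measure (St d)) (hm₁meas : Measurable m₁) :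
    ∀ sa : St d × 𝒜,
      (Tpi γ P π m₁ sa).bind κ =
        Bpath γ P π κ (fun sa' => (m₁ sa').bind κ) sa := by
  intro sa
  rw [Tpi, Measure.bind_add _ _ hκmeas, Measure.bind_smul, Measure.bind_smul,
    Ppi_bind P hπ hm₁meas hκmeas]
  rfl

/-- The time-`t` marginal path of the Bellman update of `m₁` is the
probability-path Bellman update of the time-`t` marginal path of `m₁`. -/
theorem marginal_path_of_bellman_update {d : ℕ} {𝒜 : Type*} [MeasurableSpace 𝒜]
    (t : ℝ) (ht : t ∈ Set.Icc (0 : ℝ) 1)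
    (γ : ℝ) (hγ0 : 0 ≤ γ) (hγ1 : γ < 1)
    (P : St d × 𝒜 → Measure (St d)) (hPmeas : Measurable P)
    (hPprob : ∀ sa, IsProbabilityMeasure (P sa))
    (π : St d → 𝒜) (hπ : Measurable π)
    (κ : St d → Measure (St d)) (hκmeas : Measurable κ)
    (hκprob : ∀ x, IsProbabilityMeasure (κ x))
    (m₁ : St d × 𝒜 → Measure (St d)) (hm₁meas : Measurable m₁)
    (hm₁prob : ∀ sa, IsProbabilityMeasure (m₁ sa)) :
    ∀ sa : St d × 𝒜,
      (Tpi γ P π m₁ sa).bind κ =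
        Bpath γ P π κ (fun sa' => (m₁ sa').bind κ) sa :=
  marginal_path_of_bellman_update_general γ P π hπ κ hκmeas m₁ hm₁meas
end
end

section
/- Fix t ∈ [0,1] and γ ∈ [0,1). Let m₀ ∈ P(S) be a source distribution and let p_{t|0,1} be a Markov kernel from S×S to S satisfying the marginalization identity ∫ p_{t|0,1}(·|x₀,x₁) m₀(dx₀) = p_{t|1}(·|x₁) for every x₁ ∈ S. Let μ : S×A → P(S×S) be any measurable family of joint distributions over (noise, data) pairs, and define m_t(·|s,a) := ∫ p_{t|0,1}(·|x₀,x₁) μ(d(x₀,x₁)|s,a). Define the bootstrapped coupling Γ(·|s,a) := (1−γ)·(m₀ ⊗ P(·|s,a)) + γ·∫ μ(·|s',π(s')) P(ds'|s,a), where m₀ ⊗ P(·|s,a) denotes the product measure on S×S, and define m'_t(·|s,a) := ∫ p_{t|0,1}(·|x₀,x₁) Γ(d(x₀,x₁)|s,a). Then m'_t(·|s,a) = (B_t^π m_t)(·|s,a) for all (s,a). Consequently, the probability paths generated by coupled TD-Conditional Flow Matching satisfy the update m_t^{(n+1)} = B_t^π m_t^{(n)}. -/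
/-!
Marginalizing through `p_{t|0,1}`, i.e. `ρ ↦ ρ.bind p_{t|0,1}`, is affine in the coupling `ρ`.
On the independent part `m₀ ⊗ P(·|s,a)`, Tonelli and the marginalization identity integrate the
noise out and leave `P_t(·|s,a)`; on the bootstrapped part, associativity of `bind` turns
`(∫ μ(·|s',π s') P(ds'|s,a)).bind p_{t|0,1}` into `(P^π m_t)(·|s,a)`.
-/

open MeasureTheory
open scoped ENNReal NNReal

noncomputable section

namespace MeasureTheory.Measure

variable {α β γ : Type*} [MeasurableSpace α] [MeasurableSpace β] [MeasurableSpace γ]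

theorem bind_add_s4 (μ ν : Measure α) {f : α → Measure β} (hf : Measurable f) :
    (μ + ν).bind f = μ.bind f + ν.bind f := by
  ext s hs
  simp only [add_apply, bind_apply hs hf.aemeasurable, lintegral_add_measure]

theorem bind_prodMk_right_apply (μ : Measure α) {κ : α × β → Measure γ} (hκ : Measurable κ)
    (y : β) {s : Set γ} (hs : MeasurableSet s) :
    (μ.bind fun x => κ (x, y)) s = ∫⁻ x, κ (x, y) s ∂μ :=
  bind_apply hs (hκ.comp measurable_prodMk_right).aemeasurable

theorem measurable_bind_prodMk_right (μ : Measure α) [SFinite μ] {κ : α × β → Measure γ}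
    (hκ : Measurable κ) : Measurable fun y => μ.bind fun x => κ (x, y) :=
  measurable_of_measurable_coe _ fun s hs => by
    simp only [bind_prodMk_right_apply μ hκ _ hs]
    exact ((measurable_coe hs).comp hκ).lintegral_prod_left'

theorem prod_bind (μ : Measure α) [SFinite μ] (ν : Measure β) [SFinite ν]
    {κ : α × β → Measure γ} (hκ : Measurable κ) :
    (μ.prod ν).bind κ = ν.bind fun y => μ.bind fun x => κ (x, y) := by
  ext s hs
  rw [bind_apply hs hκ.aemeasurable, lintegral_prod_symm' (fun p => κ p s)
      ((measurable_coe hs).comp hκ), bind_apply hs (measurable_bind_prodMk_right μ hκ).aemeasurable]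
  simp only [bind_prodMk_right_apply μ hκ _ hs]

end MeasureTheory.Measure

theorem coupled_marginal_path_is_bellman_update_general {d : ℕ} {𝒜 : Type*} [MeasurableSpace 𝒜]
    (γ : ℝ)
    (P : St d × 𝒜 → Measure (St d))
    (hPprob : ∀ sa, IsProbabilityMeasure (P sa))
    (π : St d → 𝒜) (hπ : Measurable π)
    -- the one-sided conditional path kernel p_{t|1}
    (κ : St d → Measure (St d))
    -- the source distribution m₀
    (m₀ : Measure (St d)) (hm₀ : IsProbabilityMeasure m₀)
    -- the two-sided conditional path kernel p_{t|0,1}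
    (κ01 : St d × St d → Measure (St d)) (hκ01meas : Measurable κ01)
    -- marginalization identity: ∫ p_{t|0,1}(·|x₀,x₁) m₀(dx₀) = p_{t|1}(·|x₁)
    (hmarg : ∀ x₁ : St d, m₀.bind (fun x₀ => κ01 (x₀, x₁)) = κ x₁)
    -- joint (noise, data) distributions
    (μ : St d × 𝒜 → Measure (St d × St d)) (hμmeas : Measurable μ)
    -- the bootstrapped coupling
    (Γ : St d × 𝒜 → Measure (St d × St d))
    (hΓ : ∀ sa : St d × 𝒜, Γ sa =
      ENNReal.ofReal (1 - γ) • m₀.prod (P sa) +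
        ENNReal.ofReal γ • (P sa).bind (fun s' => μ (s', π s'))) :
    ∀ sa : St d × 𝒜,
      (Γ sa).bind κ01 = Bpath γ P π κ (fun sa' => (μ sa').bind κ01) sa := fun sa => by
  have hμπ : Measurable fun s' => μ (s', π s') := hμmeas.comp (measurable_id.prodMk hπ)
  have : IsProbabilityMeasure (P sa) := hPprob sa
  rw [hΓ sa, Measure.bind_add_s4 _ _ hκ01meas, Measure.bind_smul, Measure.bind_smul,
    Measure.prod_bind _ _ hκ01meas, Measure.bind_bind hμπ.aemeasurable hκ01meas.aemeasurable]
  simp only [hmarg, Bpath, Pt, Ppi]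

/-- Coupled TD-CFM: marginalizing the two-sided conditional path over the
bootstrapped coupling `Γ` yields the probability-path Bellman update of the marginal path. -/
theorem coupled_marginal_path_is_bellman_update {d : ℕ} {𝒜 : Type*} [MeasurableSpace 𝒜]
    (t : ℝ) (ht : t ∈ Set.Icc (0 : ℝ) 1)
    (γ : ℝ) (hγ0 : 0 ≤ γ) (hγ1 : γ < 1)
    (P : St d × 𝒜 → Measure (St d)) (hPmeas : Measurable P)
    (hPprob : ∀ sa, IsProbabilityMeasure (P sa))
    (π : St d → 𝒜) (hπ : Measurable π)
    -- the one-sided conditional path kernel p_{t|1}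
    (κ : St d → Measure (St d)) (hκmeas : Measurable κ)
    (hκprob : ∀ x, IsProbabilityMeasure (κ x))
    -- the source distribution m₀
    (m₀ : Measure (St d)) (hm₀ : IsProbabilityMeasure m₀)
    -- the two-sided conditional path kernel p_{t|0,1}
    (κ01 : St d × St d → Measure (St d)) (hκ01meas : Measurable κ01)
    (hκ01prob : ∀ x, IsProbabilityMeasure (κ01 x))
    -- marginalization identity: ∫ p_{t|0,1}(·|x₀,x₁) m₀(dx₀) = p_{t|1}(·|x₁)
    (hmarg : ∀ x₁ : St d, m₀.bind (fun x₀ => κ01 (x₀, x₁)) = κ x₁)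
    -- joint (noise, data) distributions
    (μ : St d × 𝒜 → Measure (St d × St d)) (hμmeas : Measurable μ)
    (hμprob : ∀ sa, IsProbabilityMeasure (μ sa))
    -- the bootstrapped coupling
    (Γ : St d × 𝒜 → Measure (St d × St d))
    (hΓ : ∀ sa : St d × 𝒜, Γ sa =
      ENNReal.ofReal (1 - γ) • m₀.prod (P sa) +
        ENNReal.ofReal γ • (P sa).bind (fun s' => μ (s', π s'))) :
    ∀ sa : St d × 𝒜,
      (Γ sa).bind κ01 = Bpath γ P π κ (fun sa' => (μ sa').bind κ01) sa :=
  coupled_marginal_path_is_bellman_update_general γ P hPprob π hπ κ m₀ hm₀ κ01 hκ01meas hmarg μ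
    hμmeas Γ hΓ
end
end

section
/- Straight conditional paths: variance bound and equality under non-crossing interpolants. In the setting of the coupled variance comparison, specialize to straight conditional paths: X_t = T·X₁ + (1−T)·X₀ almost surely, and u(t,x,x₀,x₁) := x₁ − x₀. Assume moreover C := sup over (t,x,s,a) of the operator norm of J(t,x,s,a) is finite. Then: (i) Tr Cov(G_TDCFM(C)) ≤ Tr Cov(G_TD²) + γ²·C²·E‖ (X₁−X₀) − E[X₁−X₀ | T,S,A,S',X̂,X_t] ‖²; and (ii) if for almost every realization the conditional distribution of (X₀,X₁) given (T,S,A,S',X̂,X_t) is a Dirac measure (i.e., the linear interpolation paths do not intersect), then Tr Cov(G_TDCFM(C)) = Tr Cov(G_TD²). -/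
/-!
Because `u = x₁ − x₀`, the two estimators differ by `D = −γ J (f − E[f | 𝔉])` with
`f = X₁ − X₀`, where `J` is evaluated at `𝔉`-measurable arguments. Pulling the `𝔉`-measurable
operator `J` out of the conditional expectation shows that `D` is orthogonal in `L²` to every
`𝔉`-measurable square-integrable vector, in particular to constants and to the centred `G_TD²`.
Hence `Tr Cov(G_TDCFM(C)) = Tr Cov(G_TD²) + E‖D‖²`, and `E‖D‖² ≤ γ²C² E‖f − E[f | 𝔉]‖²`,
which vanishes when `(X₀, X₁)` is a function of the conditioning variables.
-/

open MeasureTheory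
open scoped ENNReal NNReal InnerProductSpace

noncomputable section

theorem measurable_clm_apply {α 𝕜 E F : Type*} [MeasurableSpace α]
    [NontriviallyNormedField 𝕜] [CompleteSpace 𝕜]
    [NormedAddCommGroup E] [NormedSpace 𝕜 E] [FiniteDimensional 𝕜 E]
    [NormedAddCommGroup F] [NormedSpace 𝕜 F] [MeasurableSpace F] [BorelSpace F]
    [SecondCountableTopology F] {f : α → E →L[𝕜] F} :
    Measurable f ↔ ∀ y, Measurable fun x => f x y := by
  refine ⟨fun hf y => hf.apply_continuousLinearMap y, fun h => ?_⟩
  let e : (E →L[𝕜] F) ≃L[𝕜] Fin (Module.finrank 𝕜 E) → F :=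
    ((ContinuousLinearEquiv.ofFinrankEq (Module.finrank_fin_fun 𝕜).symm).arrowCongr
      (1 : F ≃L[𝕜] F)).trans (ContinuousLinearEquiv.piRing _)
  refine e.toHomeomorph.measurableEmbedding.measurable_comp_iff.mp ?_
  exact measurable_pi_iff.mpr fun i => h _

/-- The paper's `Tr Cov(X)`. -/
def totalVariance {Ω F : Type*} [MeasurableSpace Ω] [NormedAddCommGroup F] [NormedSpace ℝ F]
    (μ : Measure Ω) (X : Ω → F) : ℝ :=
  ∫ ω, ‖X ω - ∫ ω', X ω' ∂μ‖ ^ 2 ∂μ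

section

variable {Ω E F G : Type*} {m m₀ : MeasurableSpace Ω} {μ : Measure[m₀] Ω}
  [NormedAddCommGroup E] [InnerProductSpace ℝ E]
  [NormedAddCommGroup F] [InnerProductSpace ℝ F]

theorem totalVariance_congr_ae {X Y : Ω → F} (h : X =ᵐ[μ] Y) :
    totalVariance μ X = totalVariance μ Y := by
  unfold totalVariance
  rw [integral_congr_ae h]
  exact integral_congr_ae (h.mono fun ω hω => by simp only [hω])

theorem memLp_two_clm_apply {L : Ω → E →L[ℝ] F} {f : Ω → E} {C : ℝ}
    (hL : AEStronglyMeasurable L μ) (hLC : ∀ᵐ ω ∂μ, ‖L ω‖ ≤ C) (hf : MemLp f 2 μ) :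
    MemLp (fun ω => L ω (f ω)) 2 μ :=
  (ContinuousLinearMap.id ℝ (E →L[ℝ] F)).memLp_of_bilin 2 (p := ⊤)
    (memLp_top_of_bound hL C hLC) hf

theorem integrable_inner_of_memLp_two {X Y : Ω → F} (hX : MemLp X 2 μ) (hY : MemLp Y 2 μ) :
    Integrable (fun ω => ⟪X ω, Y ω⟫_ℝ) μ :=
  memLp_one_iff_integrable.1 <| (innerSL ℝ).memLp_of_bilin 1 hX hY

theorem totalVariance_add_of_integral_inner_eq_zero [IsFiniteMeasure μ] {X D : Ω → F}
    (hX : MemLp X 2 μ) (hD : MemLp D 2 μ) (hD0 : ∫ ω, D ω ∂μ = 0)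
    (horth : ∫ ω, ⟪X ω - ∫ ω', X ω' ∂μ, D ω⟫_ℝ ∂μ = 0) :
    totalVariance μ (X + D) = totalVariance μ X + ∫ ω, ‖D ω‖ ^ 2 ∂μ := by
  set Xc := fun ω => X ω - ∫ ω', X ω' ∂μ
  have hXc : MemLp Xc 2 μ := hX.sub (memLp_const _)
  have hmean : ∫ ω, (X + D) ω ∂μ = ∫ ω, X ω ∂μ := by
    rw [Pi.add_def, integral_add (hX.integrable one_le_two) (hD.integrable one_le_two), hD0,
      add_zero]
  have hsq : ∀ ω, ‖(X + D) ω - ∫ ω', (X + D) ω' ∂μ‖ ^ 2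
      = ‖Xc ω‖ ^ 2 + 2 * ⟪Xc ω, D ω⟫_ℝ + ‖D ω‖ ^ 2 := fun ω => by
    rw [hmean, ← norm_add_sq_real, Pi.add_apply, add_sub_right_comm]
  have hXc2 : Integrable (fun ω => ‖Xc ω‖ ^ 2) μ := hXc.integrable_norm_pow two_ne_zero
  have hcross : Integrable (fun ω => 2 * ⟪Xc ω, D ω⟫_ℝ) μ :=
    (integrable_inner_of_memLp_two hXc hD).const_mul 2
  have hfirst : Integrable (fun ω => ‖Xc ω‖ ^ 2 + 2 * ⟪Xc ω, D ω⟫_ℝ) μ := hXc2.add hcross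
  unfold totalVariance
  simp_rw [hsq]
  rw [integral_add hfirst (hD.integrable_norm_pow two_ne_zero),
    integral_add hXc2 hcross, integral_const_mul, horth, mul_zero, add_zero]

theorem integral_norm_clm_apply_sq_le {L : Ω → E →L[ℝ] F} {g : Ω → E} {C : ℝ}
    (hLC : ∀ᵐ ω ∂μ, ‖L ω‖ ≤ C) (hg : MemLp g 2 μ) :
    ∫ ω, ‖L ω (g ω)‖ ^ 2 ∂μ ≤ C ^ 2 * ∫ ω, ‖g ω‖ ^ 2 ∂μ := by
  rw [← integral_const_mul]
  refine integral_mono_of_nonneg (.of_forall fun ω => by positivity)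
    ((hg.integrable_norm_pow two_ne_zero).const_mul _) (hLC.mono fun ω hω => ?_)
  calc ‖L ω (g ω)‖ ^ 2 ≤ (C * ‖g ω‖) ^ 2 :=
        pow_le_pow_left₀ (norm_nonneg _)
          ((L ω).le_opNorm (g ω) |>.trans (mul_le_mul_of_nonneg_right hω (norm_nonneg _))) 2
    _ = C ^ 2 * ‖g ω‖ ^ 2 := mul_pow _ _ _

variable [CompleteSpace E]

theorem integral_clm_apply_sub_condExp_eq_zero [NormedAddCommGroup G] [NormedSpace ℝ G]
    [CompleteSpace G] (hm : m ≤ m₀) [SigmaFinite (μ.trim hm)]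
    {K : Ω → E →L[ℝ] G} {f : Ω → E} (hK : AEStronglyMeasurable[m] K μ)
    (hKf : Integrable (fun ω => K ω (f ω)) μ) (hf : Integrable f μ) :
    ∫ ω, K ω (f ω - μ[f|m] ω) ∂μ = 0 := by
  have hpull : μ[fun ω => K ω (f ω)|m] =ᵐ[μ] fun ω => K ω (μ[f|m] ω) :=
    condExp_bilin_of_aestronglyMeasurable_left (ContinuousLinearMap.id ℝ _) hK hKf hf
  simp_rw [map_sub]
  rw [integral_sub hKf (integrable_condExp.congr hpull), ← integral_congr_ae hpull,
    integral_condExp hm, sub_self]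

theorem integral_inner_clm_apply_sub_condExp_eq_zero (hm : m ≤ m₀) [IsFiniteMeasure μ]
    {W : Ω → F} {L : Ω → E →L[ℝ] F} {f : Ω → E} {C : ℝ}
    (hWm : AEStronglyMeasurable[m] W μ) (hW : MemLp W 2 μ) (hL : AEStronglyMeasurable[m] L μ)
    (hLC : ∀ᵐ ω ∂μ, ‖L ω‖ ≤ C) (hf : MemLp f 2 μ) :
    ∫ ω, ⟪W ω, L ω (f ω - μ[f|m] ω)⟫_ℝ ∂μ = 0 :=
  integral_clm_apply_sub_condExp_eq_zero hm
    (K := fun ω => ContinuousLinearMap.compL ℝ E F ℝ (innerSL ℝ (W ω)) (L ω))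
    ((ContinuousLinearMap.compL ℝ E F ℝ).continuous₂.comp_aestronglyMeasurable₂
      ((innerSL ℝ).continuous.comp_aestronglyMeasurable hWm) hL)
    (integrable_inner_of_memLp_two hW (memLp_two_clm_apply (hL.mono hm) hLC hf))
    (hf.integrable one_le_two)

variable [CompleteSpace F] (hm : m ≤ m₀) [IsFiniteMeasure μ]
  {X : Ω → F} {L : Ω → E →L[ℝ] F} {f : Ω → E} {C : ℝ}
  (hXm : AEStronglyMeasurable[m] X μ) (hX : MemLp X 2 μ) (hL : AEStronglyMeasurable[m] L μ)
  (hLC : ∀ᵐ ω ∂μ, ‖L ω‖ ≤ C) (hf : MemLp f 2 μ)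
include hm hXm hX hL hLC hf

theorem totalVariance_add_clm_apply_sub_condExp :
    totalVariance μ (X + fun ω => L ω (f ω - μ[f|m] ω)) =
      totalVariance μ X + ∫ ω, ‖L ω (f ω - μ[f|m] ω)‖ ^ 2 ∂μ :=
  totalVariance_add_of_integral_inner_eq_zero hX
    (memLp_two_clm_apply (hL.mono hm) hLC (hf.sub (hf.condExp one_le_two)))
    (integral_clm_apply_sub_condExp_eq_zero hm hL
      ((memLp_two_clm_apply (hL.mono hm) hLC hf).integrable one_le_two)
      (hf.integrable one_le_two))
    (integral_inner_clm_apply_sub_condExp_eq_zero hm (hXm.sub aestronglyMeasurable_const)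
      (hX.sub (memLp_const _)) hL hLC hf)

theorem totalVariance_add_clm_apply_sub_condExp_le :
    totalVariance μ (X + fun ω => L ω (f ω - μ[f|m] ω)) ≤
      totalVariance μ X + C ^ 2 * ∫ ω, ‖f ω - μ[f|m] ω‖ ^ 2 ∂μ := by
  rw [totalVariance_add_clm_apply_sub_condExp hm hXm hX hL hLC hf]
  gcongr
  exact integral_norm_clm_apply_sq_le hLC (hf.sub (hf.condExp one_le_two))

theorem totalVariance_add_clm_apply_sub_condExp_of_aestronglyMeasurable
    (hfm : AEStronglyMeasurable[m] f μ) :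
    totalVariance μ (X + fun ω => L ω (f ω - μ[f|m] ω)) = totalVariance μ X := by
  have hres : ∀ᵐ ω ∂μ, f ω - μ[f|m] ω = 0 :=
    (condExp_of_aestronglyMeasurable' hm hfm (hf.integrable one_le_two)).mono
      fun ω hω => sub_eq_zero.mpr hω.symm
  rw [totalVariance_add_clm_apply_sub_condExp hm hXm hX hL hLC hf,
    integral_eq_zero_of_ae (hres.mono fun ω hω => by simp [hω]), add_zero]

end

/-- Straight conditional paths: the total variance of the coupled TD-CFM(C)
estimator is bounded by that of TD²-CFM plus `γ²C²` times the expected conditional variance of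
`X₁ − X₀`; when the linear interpolation paths do not intersect (the conditional law of
`(X₀,X₁)` given the conditioning information is Dirac), the two total variances coincide. -/
theorem straight_paths_variance_bound_and_equality
    {d np : ℕ} {𝒜 : Type*} [MeasurableSpace 𝒜]
    {Ω : Type*} [MeasurableSpace Ω] (μ : Measure Ω) [IsProbabilityMeasure μ]
    (γ : ℝ) (hγ0 : 0 ≤ γ) (hγ1 : γ < 1)
    (ρ : Measure (St d × 𝒜)) (hρ : IsProbabilityMeasure ρ)
    (P : St d × 𝒜 → Measure (St d)) (hPmeas : Measurable P)
    (hPprob : ∀ sa, IsProbabilityMeasure (P sa))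
    (π : St d → 𝒜) (hπ : Measurable π)
    -- the conditional law of X̂ given (T, S, A, S')
    (κhat : ℝ → St d × 𝒜 × St d → Measure (St d))
    (hκhatmeas : Measurable fun q : ℝ × (St d × 𝒜 × St d) => κhat q.1 q.2)
    (hκhatprob : ∀ t z, IsProbabilityMeasure (κhat t z))
    -- the two-sided conditional probability-path kernel p_{t|0,1}
    (κ01 : ℝ → St d × St d → Measure (St d))
    (hκ01meas : Measurable fun q : ℝ × (St d × St d) => κ01 q.1 q.2)
    (hκ01prob : ∀ t z, IsProbabilityMeasure (κ01 t z))
    -- the previous iterate's joint (noise, data) family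
    (m01 : St d × 𝒜 → Measure (St d × St d)) (hm01meas : Measurable m01)
    (hm01prob : ∀ sa, IsProbabilityMeasure (m01 sa))
    -- the random variables
    (T : Ω → ℝ) (S : Ω → St d) (Aa : Ω → 𝒜) (S' : Ω → St d)
    (Xhat X0 X1 Xt : Ω → St d)
    (hT : Measurable T) (hS : Measurable S) (hA : Measurable Aa) (hS' : Measurable S')
    (hXhat : Measurable Xhat) (hX0 : Measurable X0) (hX1 : Measurable X1)
    (hXt : Measurable Xt)
    -- the joint law: T uniform and independent; (S,A) ~ ρ; S' ~ P(·|S,A);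
    -- (X₀,X₁) ~ m_{0,1}(·|S',π(S')) and X̂ conditionally independent given (T,S,A,S');
    -- X_t ~ p_{T|0,1}(·|X₀,X₁)
    (hlaw : μ.map (fun ω => (T ω, S ω, Aa ω, S' ω, Xhat ω, X0 ω, X1 ω, Xt ω)) =
      (volume.restrict (Set.Icc (0 : ℝ) 1)).bind fun t =>
        ρ.bind fun sa =>
          (P sa).bind fun s' =>
            ((κhat t (sa.1, sa.2, s')).prod (m01 (s', π s'))).bind fun q =>
              (κ01 t q.2).map fun xt =>
                (t, sa.1, sa.2, s', q.1, q.2.1, q.2.2, xt))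
    -- the one-step conditional field u⁰, the two-sided conditional field u_t(x|x₀,x₁),
    -- the parameterized field v, and ∇_θ v
    (u0 : ℝ → St d → St d → St d)
    (hu0 : Measurable fun q : ℝ × St d × St d => u0 q.1 q.2.1 q.2.2)
    (u : ℝ → St d → St d → St d → St d)
    (hu : Measurable fun q : ℝ × St d × St d × St d => u q.1 q.2.1 q.2.2.1 q.2.2.2)
    (v : ℝ → St d → St d × 𝒜 → St d)
    (hv : Measurable fun q : ℝ × St d × (St d × 𝒜) => v q.1 q.2.1 q.2.2)
    (J : ℝ → St d → St d × 𝒜 → (St d →L[ℝ] EuclideanSpace ℝ (Fin np)))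
    (hJ : Measurable fun q : (ℝ × St d × (St d × 𝒜)) × St d =>
      J q.1.1 q.1.2.1 q.1.2.2 q.2)
    -- the conditioning σ-algebra 𝔉 = σ(T,S,A,S',X̂,X_t)
    (𝔉 : MeasurableSpace Ω)
    (h𝔉 : 𝔉 = MeasurableSpace.comap
      (fun ω => (T ω, S ω, Aa ω, S' ω, Xhat ω, Xt ω)) inferInstance)
    -- the bootstrapped marginal field: h(T,S',X_t) is a version of E[u(T,X_t,X₀,X₁)|𝔉]
    (h : ℝ → St d → St d → St d)
    (hmeas : Measurable fun q : ℝ × St d × St d => h q.1 q.2.1 q.2.2)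
    (hh : (fun ω => h (T ω) (S' ω) (Xt ω)) =ᵐ[μ]
      μ[(fun ω => u (T ω) (Xt ω) (X0 ω) (X1 ω)) | 𝔉])
    -- the common one-step term, the two estimators, and the bootstrapped random vector Y
    (A0 : Ω → EuclideanSpace ℝ (Fin np))
    (hA0 : A0 = fun ω =>
      (1 - γ) • (J (T ω) (Xhat ω) (S ω, Aa ω))
        (v (T ω) (Xhat ω) (S ω, Aa ω) - u0 (T ω) (Xhat ω) (S' ω)))
    (G2 GC Y : Ω → EuclideanSpace ℝ (Fin np))
    (hG2 : G2 = fun ω => A0 ω +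
      γ • (J (T ω) (Xt ω) (S ω, Aa ω))
        (v (T ω) (Xt ω) (S ω, Aa ω) - h (T ω) (S' ω) (Xt ω)))
    (hGC : GC = fun ω => A0 ω +
      γ • (J (T ω) (Xt ω) (S ω, Aa ω))
        (v (T ω) (Xt ω) (S ω, Aa ω) - u (T ω) (Xt ω) (X0 ω) (X1 ω)))
    (hY : Y = fun ω => (J (T ω) (Xt ω) (S ω, Aa ω)) (u (T ω) (Xt ω) (X0 ω) (X1 ω)))
    -- square-integrability
    (hG2L2 : MemLp G2 2 μ) (hGCL2 : MemLp GC 2 μ) (hYL2 : MemLp Y 2 μ)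
    (hXL2 : MemLp (fun ω => X1 ω - X0 ω) 2 μ)
    -- straight conditional paths: X_t = T•X₁ + (1−T)•X₀ and u_t(x|x₀,x₁) = x₁ − x₀
    (hstraight : ∀ᵐ ω ∂μ, Xt ω = T ω • X1 ω + (1 - T ω) • X0 ω)
    (hustraight : ∀ t x x₀ x₁, u t x x₀ x₁ = x₁ - x₀)
    -- uniform bound on the operator norm of ∇_θ v
    (C : ℝ) (hC : ∀ t x sa, ‖J t x sa‖ ≤ C) :
    -- (i) variance bound
    (∫ ω, ‖GC ω - ∫ ω', GC ω' ∂μ‖ ^ 2 ∂μ) ≤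
      (∫ ω, ‖G2 ω - ∫ ω', G2 ω' ∂μ‖ ^ 2 ∂μ) +
        γ ^ 2 * C ^ 2 *
          ∫ ω, ‖(X1 ω - X0 ω) -
            (μ[(fun ω' => X1 ω' - X0 ω') | 𝔉]) ω‖ ^ 2 ∂μ ∧
    -- (ii) if the conditional distribution of (X₀,X₁) given 𝔉 is a.e. a Dirac measure
    -- (the linear interpolants do not intersect), the total variances coincide
    ((∃ g : ℝ × St d × 𝒜 × St d × St d × St d → St d × St d, Measurable g ∧
        (fun ω => (X0 ω, X1 ω)) =ᵐ[μ]
          fun ω => g (T ω, S ω, Aa ω, S' ω, Xhat ω, Xt ω)) →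
      (∫ ω, ‖GC ω - ∫ ω', GC ω' ∂μ‖ ^ 2 ∂μ) =
        (∫ ω, ‖G2 ω - ∫ ω', G2 ω' ∂μ‖ ^ 2 ∂μ)) := by
  set f : Ω → St d := fun ω => X1 ω - X0 ω
  set Z := fun ω => (T ω, S ω, Aa ω, S' ω, Xhat ω, Xt ω)
  -- `𝔉` is a local instance here; the ambient σ-algebra is reached only through `hT`, ….
  have hZ := hT.prodMk (hS.prodMk (hA.prodMk (hS'.prodMk (hXhat.prodMk hXt))))
  have hle : 𝔉 ≤ _ := h𝔉 ▸ hZ.comap_le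
  have hZF : Measurable[𝔉] Z := h𝔉 ▸ comap_measurable Z
  have hTF : Measurable[𝔉] T := hZF.fst
  have hSAF : Measurable[𝔉] fun ω => (S ω, Aa ω) := hZF.snd.fst.prodMk hZF.snd.snd.fst
  have hS'F : Measurable[𝔉] S' := hZF.snd.snd.snd.fst
  have hXhatF : Measurable[𝔉] Xhat := hZF.snd.snd.snd.snd.fst
  have hXtF : Measurable[𝔉] Xt := hZF.snd.snd.snd.snd.snd
  have hJF : ∀ {x y : Ω → St d}, Measurable[𝔉] x → Measurable[𝔉] y →
      Measurable[𝔉] fun ω => J (T ω) (x ω) (S ω, Aa ω) (y ω) := fun hx hy =>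
    hJ.comp ((hTF.prodMk (hx.prodMk hSAF)).prodMk hy)
  have hG2F : Measurable[𝔉] G2 := by
    rw [hG2, hA0]
    exact ((hJF hXhatF ((hv.comp (hTF.prodMk (hXhatF.prodMk hSAF))).sub
      (hu0.comp (hTF.prodMk (hXhatF.prodMk hS'F))))).const_smul (1 - γ)).add
      ((hJF hXtF ((hv.comp (hTF.prodMk (hXtF.prodMk hSAF))).sub
        (hmeas.comp (hTF.prodMk (hS'F.prodMk hXtF))))).const_smul γ)
  set L := fun ω => -γ • J (T ω) (Xt ω) (S ω, Aa ω)
  have hLF : Measurable[𝔉] L :=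
    (measurable_clm_apply.mpr fun _ => hJF hXtF measurable_const).const_smul (-γ)
  have hLC : ∀ᵐ ω ∂μ, ‖L ω‖ ≤ |γ| * C := .of_forall fun ω => by
    simpa [L, norm_smul] using mul_le_mul_of_nonneg_left (hC _ _ _) (abs_nonneg γ)
  have hGC_ae : GC =ᵐ[μ] G2 + fun ω => L ω (f ω - μ[f|𝔉] ω) := by
    simp only [hustraight] at hh hGC
    filter_upwards [hh] with ω hω
    simp only [hGC, hG2, hω, L, f, Pi.add_apply, _root_.smul_apply, map_sub, neg_smul, smul_sub]
    abel
  rw [← sq_abs γ, ← mul_pow]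
  refine ⟨(totalVariance_congr_ae hGC_ae).trans_le
    (totalVariance_add_clm_apply_sub_condExp_le hle hG2F.aestronglyMeasurable hG2L2
      hLF.aestronglyMeasurable hLC hXL2), fun ⟨g, hg, hX01⟩ => ?_⟩
  have hgZ : Measurable[𝔉] fun ω => g (Z ω) := hg.comp hZF
  have hfF : AEStronglyMeasurable[𝔉] f μ :=
    (hgZ.snd.sub hgZ.fst).aestronglyMeasurable.congr <| hX01.mono fun ω hω => by
      simp only at hω
      simp only [Pi.sub_apply, f, Z, ← hω]
  exact (totalVariance_congr_ae hGC_ae).trans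
    (totalVariance_add_clm_apply_sub_condExp_of_aestronglyMeasurable hle
      hG2F.aestronglyMeasurable hG2L2 hLF.aestronglyMeasurable hLC hXL2 hfF)
end
end
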